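/- arXiv:2311.17855 — 2 statements merged into one kernel-verified Lean document; each statement's English description precedes it below -/
import Mathlib

section
/- Let P, P̂, P̄ ∈ ℝ^{S×S} be row-stochastic matrices with, for every x, the support of P(x,·) contained in the support of P̂(x,·) and the supports of P(x,·) and P̄(x,·) contained in the support of P̂(x,·); let γ ∈ [0,1), r ∈ ℝ^S, φ₁,…,φ_d : S → ℝ, and ψ : S → ℝ^d. Define εM(x) := √(KL(P(x,·)‖P̂(x,·))) and εQ(x) := ‖(Pφ)(x) − ψ(x)‖₂, where (Pφ)(x) ∈ ℝ^d has entries ∑_y P(x,y)·φᵢ(y). Assume ‖εM‖∞ > 0 and ‖εQ‖∞ > 0, set β := ‖εQ‖∞/‖εM‖∞, and assume for every x ∈ S: (i) KL(P(x,·)‖P̄(x,·)) ≤ KL(P(x,·)‖P̂(x,·)) + (2/β²)·εQ(x)²; (ii) KL(P̄(x,·)‖P̂(x,·)) + (1/β²)·‖(P̄φ)(x) − ψ(x)‖₂² ≤ KL(P(x,·)‖P̂(x,·)) + (1/β²)·εQ(x)². Then, with V := (I − γP)⁻¹ r, V̄ := (I − γP̄)⁻¹ r, c₁ := γ√2/(1−γ),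 and c₂ := 3γ√d/(1−γ), for every w ∈ ℝ^d: ‖V − V̄‖∞ ≤ 3c₁·‖εM‖∞·‖V − ∑_{i=1}^d wᵢφᵢ‖∞ + c₂·‖εQ‖∞·‖w‖∞. -/
open Finset Matrix

/-- Supremum norm of a vector indexed by a finite type. -/
noncomputable def supNorm {S : Type*} [Fintype S] (v : S → ℝ) : ℝ := ⨆ x, |v x|

/-- KL divergence of finitely supported probability vectors,
with the convention `0 * log 0 = 0` (automatic since `Real.log 0 = 0`). -/
noncomputable def KLfin {S : Type*} [Fintype S] (p q : S → ℝ) : ℝ :=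
  ∑ y, p y * Real.log (p y / q y)

/-!
Subtracting the Bellman equations `V = r + γ P V` and `V̄ = r + γ P̄ V̄` gives
`‖V - V̄‖∞ ≤ γ / (1 - γ) · maxₓ |((P - P̄) V)(x)|`. Writing `V = (V - ∑ wᵢ φᵢ) + ∑ wᵢ φᵢ` splits
`(P - P̄) V` into an `ℓ¹` term, bounded by Pinsker's inequality through `P̂`, and a feature term
`(P - P̄) φ = (P φ - ψ) - (P̄ φ - ψ)`. With `β` balancing the two errors, condition (ii) yields
`KL(P̄‖P̂) ≤ 2 ‖εM‖²` and `‖P̄ φ - ψ‖² ≤ 2 ‖εQ‖²`, which closes both bounds.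

Pinsker's inequality `(∑ |p - q|)² ≤ 2 KL(p‖q)` follows by Cauchy–Schwarz from the pointwise bound
`t log t - t + 1 ≥ 3 (t - 1)² / (2 (t + 2))`.
-/

open Real

lemma sub_one_mul_add_one_mul_log_sub_nonneg {t : ℝ} (ht : 0 < t) :
    0 ≤ (t - 1) * ((t + 1) * log t - 2 * (t - 1)) := by
  set h : ℝ → ℝ := fun u => (u + 1) * log u - 2 * (u - 1)
  have hderiv : ∀ u, 0 < u → HasDerivAt h (log u + (u + 1) * u⁻¹ - 2) u := fun u hu =>
    ((((hasDerivAt_id' u).add_const 1).mul (hasDerivAt_log hu.ne')).sub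
      (((hasDerivAt_id' u).sub_const 1).const_mul 2)).congr_deriv (by ring)
  have hmono : MonotoneOn h (Set.Ioi 0) := by
    refine monotoneOn_of_hasDerivWithinAt_nonneg (f' := fun u => log u + (u + 1) * u⁻¹ - 2)
      (convex_Ioi 0)
      (fun u hu => (hderiv u hu).continuousAt.continuousWithinAt) (fun u hu => ?_) fun u hu => ?_
    · rw [interior_Ioi] at hu ⊢
      exact (hderiv u hu).hasDerivWithinAt
    · rw [interior_Ioi] at hu
      have := one_sub_inv_le_log_of_pos hu
      rw [add_mul, one_mul, mul_inv_cancel₀ hu.ne']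
      linarith
  have h1 : h 1 = 0 := by simp [h]
  rcases le_total t 1 with ht1 | ht1
  · exact mul_nonneg_of_nonpos_of_nonpos (by linarith) (h1 ▸ hmono ht (Set.mem_Ioi.2 one_pos) ht1)
  · exact mul_nonneg (by linarith) (h1 ▸ hmono (Set.mem_Ioi.2 one_pos) ht ht1)

lemma le_of_hasDerivAt_of_nonpos_of_nonneg {f f' : ℝ → ℝ}
    (hf : ∀ t, 0 < t → HasDerivAt f (f' t) t)
    (hf'_le : ∀ t, 0 < t → t < 1 → f' t ≤ 0) (hf'_ge : ∀ t, 1 < t → 0 ≤ f' t)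
    {t : ℝ} (ht : 0 < t) : f 1 ≤ f t := by
  rcases le_total t 1 with ht1 | ht1
  · refine antitoneOn_of_hasDerivWithinAt_nonpos (f' := f') (convex_Icc t 1)
      (fun u hu => (hf u (ht.trans_le hu.1)).continuousAt.continuousWithinAt)
      (fun u hu => ?_) (fun u hu => ?_) ⟨le_rfl, ht1⟩ ⟨ht1, le_rfl⟩ ht1
    · rw [interior_Icc] at hu ⊢
      exact (hf u (ht.trans hu.1)).hasDerivWithinAt
    · rw [interior_Icc] at hu
      exact hf'_le u (ht.trans hu.1) hu.2
  · refine monotoneOn_of_hasDerivWithinAt_nonneg (f' := f') (convex_Ici 1)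
      (fun u hu => (hf u (one_pos.trans_le hu)).continuousAt.continuousWithinAt)
      (fun u hu => ?_) (fun u hu => ?_) Set.self_mem_Ici ht1 ht1
    · rw [interior_Ici] at hu ⊢
      exact (hf u (one_pos.trans hu)).hasDerivWithinAt
    · rw [interior_Ici] at hu
      exact hf'_ge u hu

lemma three_mul_sub_one_sq_le {t : ℝ} (ht : 0 ≤ t) :
    3 * (t - 1) ^ 2 ≤ 2 * (t + 2) * (t * log t - t + 1) := by
  rcases ht.eq_or_lt with rfl | ht
  · norm_num
  set G : ℝ → ℝ := fun u => 2 * (u + 2) * (u * log u - u + 1) - 3 * (u - 1) ^ 2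
  have hG : ∀ u, 0 < u → HasDerivAt G (4 * ((u + 1) * log u - 2 * (u - 1))) u := fun u hu => by
    have hlog : HasDerivAt (fun u => u * log u - u + 1) (log u) u := by
      simpa using ((hasDerivAt_mul_log hu.ne').sub (hasDerivAt_id u)).add_const 1
    exact ((((hasDerivAt_id' u).add_const 2).const_mul 2 |>.mul hlog).sub
      ((((hasDerivAt_id' u).sub_const 1).pow 2).const_mul 3)).congr_deriv (by ring)
  have hsign := fun u (hu : 0 < u) => sub_one_mul_add_one_mul_log_sub_nonneg hu
  have := le_of_hasDerivAt_of_nonpos_of_nonneg hG (fun u hu hu1 => by nlinarith [hsign u hu])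
    (fun u hu => by nlinarith [hsign u (one_pos.trans hu)]) ht
  simp only [G, log_one] at this
  linarith

lemma sub_add_sq_div_le_mul_log_div {p q : ℝ} (hp : 0 ≤ p) (hq : 0 ≤ q) (hpq : q = 0 → p = 0) :
    p - q + 3 / 2 * ((p - q) ^ 2 / (p + 2 * q)) ≤ p * log (p / q) := by
  rcases hq.eq_or_lt with rfl | hq
  · simp [hpq rfl]
  have key := mul_le_mul_of_nonneg_left (three_mul_sub_one_sq_le (div_nonneg hp hq.le))
    (sq_nonneg q)
  rw [show q ^ 2 * (3 * (p / q - 1) ^ 2) = 3 * (p - q) ^ 2 by field_simp,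
    show q ^ 2 * (2 * (p / q + 2) * (p / q * log (p / q) - p / q + 1))
      = 2 * (p + 2 * q) * (p * log (p / q) - p + q) by field_simp] at key
  have hX : 3 / 2 * ((p - q) ^ 2 / (p + 2 * q)) ≤ p * log (p / q) - p + q := by
    rw [← mul_div_assoc, div_le_iff₀ (by positivity)]
    nlinarith
  linarith

lemma sq_sum_abs_sub_le_two_mul_KLfin {ι : Type*} [Fintype ι] {p q : ι → ℝ}
    (hp0 : ∀ i, 0 ≤ p i) (hq0 : ∀ i, 0 ≤ q i) (hp1 : ∑ i, p i = 1) (hq1 : ∑ i, q i = 1)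
    (hpq : ∀ i, q i = 0 → p i = 0) :
    (∑ i, |p i - q i|) ^ 2 ≤ 2 * KLfin p q := by
  have hpq2 : ∀ i, 0 ≤ p i + 2 * q i := fun i => by linarith [hp0 i, hq0 i]
  have hCS : (∑ i, |p i - q i|) ^ 2 ≤
      (∑ i, (p i - q i) ^ 2 / (p i + 2 * q i)) * ∑ i, (p i + 2 * q i) :=
    sum_sq_le_sum_mul_sum_of_sq_le_mul _ (fun i _ => div_nonneg (sq_nonneg _) (hpq2 i))
      (fun i _ => hpq2 i) fun i _ => by
        rcases (hpq2 i).eq_or_lt with h | h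
        · have : p i = q i := by linarith [hp0 i, hq0 i]
          simp [this]
        · rw [sq_abs, div_mul_cancel₀ _ h.ne']
  have hsum : ∑ i, (p i + 2 * q i) = 3 := by
    rw [sum_add_distrib, ← mul_sum, hp1, hq1]; norm_num
  have hKL : 3 / 2 * ∑ i, (p i - q i) ^ 2 / (p i + 2 * q i) ≤ KLfin p q := by
    have := sum_le_sum fun i (_ : i ∈ univ) =>
      sub_add_sq_div_le_mul_log_div (hp0 i) (hq0 i) (hpq i)
    rwa [sum_add_distrib, sum_sub_distrib, hp1, hq1, ← mul_sum, sub_self, zero_add] at this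
  rw [hsum] at hCS
  linarith

lemma KLfin_nonneg {ι : Type*} [Fintype ι] {p q : ι → ℝ}
    (hp0 : ∀ i, 0 ≤ p i) (hq0 : ∀ i, 0 ≤ q i) (hp1 : ∑ i, p i = 1) (hq1 : ∑ i, q i = 1)
    (hpq : ∀ i, q i = 0 → p i = 0) : 0 ≤ KLfin p q := by
  nlinarith [sq_sum_abs_sub_le_two_mul_KLfin hp0 hq0 hp1 hq1 hpq, sq_nonneg (∑ i, |p i - q i|)]

lemma sum_abs_sub_le_sqrt_of_KLfin_le {ι : Type*} [Fintype ι] {p q : ι → ℝ}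
    (hp0 : ∀ i, 0 ≤ p i) (hq0 : ∀ i, 0 ≤ q i) (hp1 : ∑ i, p i = 1) (hq1 : ∑ i, q i = 1)
    (hpq : ∀ i, q i = 0 → p i = 0) {a : ℝ} (ha : KLfin p q ≤ a) :
    ∑ i, |p i - q i| ≤ √(2 * a) :=
  Real.le_sqrt_of_sq_le ((sq_sum_abs_sub_le_two_mul_KLfin hp0 hq0 hp1 hq1 hpq).trans (by linarith))

section SupNorm

variable {S : Type*} [Fintype S]

lemma abs_le_supNorm (v : S → ℝ) (x : S) : |v x| ≤ supNorm v :=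
  le_ciSup (f := fun x => |v x|) (Set.finite_range _).bddAbove x

lemma le_supNorm (v : S → ℝ) (x : S) : v x ≤ supNorm v :=
  (le_abs_self _).trans (abs_le_supNorm v x)

lemma supNorm_nonneg (v : S → ℝ) : 0 ≤ supNorm v :=
  Real.iSup_nonneg fun _ => abs_nonneg _

lemma supNorm_le {v : S → ℝ} {a : ℝ} (h : ∀ x, |v x| ≤ a) (ha : 0 ≤ a) : supNorm v ≤ a :=
  Real.iSup_le h ha

lemma abs_sum_mul_le_sum_abs_mul_supNorm (a b : S → ℝ) :
    |∑ y, a y * b y| ≤ (∑ y, |a y|) * supNorm b :=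
  calc |∑ y, a y * b y| ≤ ∑ y, |a y| * |b y| := by
        simpa only [abs_mul] using abs_sum_le_sum_abs (fun y => a y * b y) univ
    _ ≤ ∑ y, |a y| * supNorm b := sum_le_sum fun y _ =>
        mul_le_mul_of_nonneg_left (abs_le_supNorm b y) (abs_nonneg _)
    _ = (∑ y, |a y|) * supNorm b := (sum_mul _ _ _).symm

lemma abs_sum_mul_le_supNorm {a b : S → ℝ} (ha0 : ∀ y, 0 ≤ a y) (ha1 : ∑ y, a y = 1) :
    |∑ y, a y * b y| ≤ supNorm b := by
  simpa [abs_of_nonneg (ha0 _), ha1] using abs_sum_mul_le_sum_abs_mul_supNorm a b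

lemma abs_sum_mul_le_of_approx {ι : Type*} [Fintype ι] (μ V : S → ℝ) (φ : ι → S → ℝ)
    (w : ι → ℝ) :
    |∑ y, μ y * V y| ≤ (∑ y, |μ y|) * supNorm (fun y => V y - ∑ i, w i * φ i y) +
      (∑ i, |∑ y, μ y * φ i y|) * supNorm w := by
  have hsplit : ∑ y, μ y * V y =
      ∑ y, μ y * (V y - ∑ i, w i * φ i y) + ∑ i, (∑ y, μ y * φ i y) * w i := by
    simp only [mul_sub, sum_sub_distrib, mul_sum, sum_mul]
    rw [sum_comm (f := fun i y => μ y * φ i y * w i)]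
    simp only [mul_assoc, mul_comm (w _)]
    ring
  rw [hsplit]
  exact (abs_add_le _ _).trans (add_le_add (abs_sum_mul_le_sum_abs_mul_supNorm _ _)
    (abs_sum_mul_le_sum_abs_mul_supNorm _ _))

end SupNorm

lemma sqrt_sum_sub_sq_le {ι : Type*} [Fintype ι] (b c : ι → ℝ) :
    √(∑ i, (b i - c i) ^ 2) ≤ √(∑ i, b i ^ 2) + √(∑ i, c i ^ 2) := by
  simpa [EuclideanSpace.norm_eq] using
    norm_sub_le (WithLp.toLp 2 b : EuclideanSpace ℝ ι) (WithLp.toLp 2 c)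

lemma sum_abs_le_sqrt_card_mul_sqrt_sum_sq {ι : Type*} [Fintype ι] (a : ι → ℝ) :
    ∑ i, |a i| ≤ √(Fintype.card ι) * √(∑ i, a i ^ 2) := by
  rw [← Real.sqrt_mul (Nat.cast_nonneg _)]
  refine Real.le_sqrt_of_sq_le ?_
  simpa only [sq_abs, card_univ] using sq_sum_le_card_mul_sum_sq (s := univ) (f := fun i => |a i|)

section Bellman

variable {S : Type*} [Fintype S]

lemma det_one_sub_smul_ne_zero [DecidableEq S] {P : Matrix S S ℝ} {γ : ℝ}
    (hP0 : ∀ x y, 0 ≤ P x y) (hP1 : ∀ x, ∑ y, P x y = 1) (hγ0 : 0 ≤ γ) (hγ1 : γ < 1) :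
    ((1 : Matrix S S ℝ) - γ • P).det ≠ 0 := by
  refine det_ne_zero_of_sum_row_lt_diag fun x => ?_
  have hPxx : P x x ≤ 1 := hP1 x ▸ single_le_sum (fun y _ => hP0 x y) (mem_univ x)
  have hoff : ∀ y ∈ univ.erase x, ‖((1 : Matrix S S ℝ) - γ • P) x y‖ = γ * P x y := fun y hy => by
    rw [Matrix.sub_apply, Matrix.smul_apply, one_apply_ne (ne_of_mem_erase hy).symm, smul_eq_mul,
      Real.norm_eq_abs, zero_sub, abs_neg, abs_of_nonneg (mul_nonneg hγ0 (hP0 x y))]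
  rw [sum_congr rfl hoff, ← mul_sum, sum_erase_eq_sub (mem_univ x), hP1 x, Matrix.sub_apply,
    Matrix.smul_apply, one_apply_eq, smul_eq_mul, Real.norm_eq_abs,
    abs_of_nonneg (by nlinarith [hP0 x x])]
  nlinarith [hP0 x x]

lemma apply_eq_add_mul_sum_of_eq_inv_mulVec [DecidableEq S] {P : Matrix S S ℝ} {γ : ℝ}
    {r V : S → ℝ} (hP0 : ∀ x y, 0 ≤ P x y) (hP1 : ∀ x, ∑ y, P x y = 1) (hγ0 : 0 ≤ γ)
    (hγ1 : γ < 1) (hV : V = ((1 : Matrix S S ℝ) - γ • P)⁻¹.mulVec r) (x : S) :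
    V x = r x + γ * ∑ y, P x y * V y := by
  have hVr : ((1 : Matrix S S ℝ) - γ • P).mulVec V = r := by
    rw [hV, mulVec_mulVec, mul_nonsing_inv _ (det_one_sub_smul_ne_zero hP0 hP1 hγ0 hγ1).isUnit,
      one_mulVec]
  rw [sub_mulVec, Matrix.smul_mulVec, one_mulVec] at hVr
  have := congrFun hVr x
  simp only [Pi.sub_apply, Pi.smul_apply, smul_eq_mul, mulVec, dotProduct] at this
  linarith

lemma supNorm_sub_le_of_bellman {P Q : Matrix S S ℝ} {γ K : ℝ} {r V W : S → ℝ}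
    (hQ0 : ∀ x y, 0 ≤ Q x y) (hQ1 : ∀ x, ∑ y, Q x y = 1) (hγ0 : 0 ≤ γ) (hγ1 : γ < 1)
    (hV : ∀ x, V x = r x + γ * ∑ y, P x y * V y) (hW : ∀ x, W x = r x + γ * ∑ y, Q x y * W y)
    (hK0 : 0 ≤ K) (hK : ∀ x, |∑ y, (P x y - Q x y) * V y| ≤ K) :
    supNorm (fun x => V x - W x) ≤ γ * K / (1 - γ) := by
  set M := supNorm (fun x => V x - W x)
  have hrec : ∀ x, V x - W x =
      γ * ∑ y, Q x y * (V y - W y) + γ * ∑ y, (P x y - Q x y) * V y := fun x => by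
    rw [hV x, hW x]
    simp only [mul_sub, sub_mul, sum_sub_distrib]
    ring
  have hM : M ≤ γ * M + γ * K := supNorm_le (fun x => by
    rw [hrec x]
    refine (abs_add_le _ _).trans ?_
    rw [abs_mul, abs_mul, abs_of_nonneg hγ0]
    gcongr
    · exact abs_sum_mul_le_supNorm (hQ0 x) (hQ1 x)
    · exact hK x) (by have := supNorm_nonneg fun x => V x - W x; positivity)
  rw [le_div_iff₀ (by linarith)]
  linarith

end Bellman

lemma le_two_mul_sq_of_add_inv_sq_mul_le {a b c e m q : ℝ} (hm : 0 < m) (hq : 0 < q)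
    (ha : 0 ≤ a) (hb : 0 ≤ b) (hc : c ≤ m ^ 2) (he : e ≤ q ^ 2)
    (h : a + 1 / (q / m) ^ 2 * b ≤ c + 1 / (q / m) ^ 2 * e) :
    a ≤ 2 * m ^ 2 ∧ b ≤ 2 * q ^ 2 := by
  have hκ : 1 / (q / m) ^ 2 = m ^ 2 / q ^ 2 := by field_simp
  rw [hκ] at h
  have hbound : a + m ^ 2 / q ^ 2 * b ≤ 2 * m ^ 2 := by
    have : m ^ 2 / q ^ 2 * e ≤ m ^ 2 := by
      calc m ^ 2 / q ^ 2 * e ≤ m ^ 2 / q ^ 2 * q ^ 2 := by gcongr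
        _ = m ^ 2 := by field_simp
    linarith
  have hb' : m ^ 2 / q ^ 2 * b ≤ 2 * m ^ 2 := by linarith
  rw [div_mul_eq_mul_div, div_le_iff₀ (by positivity)] at hb'
  exact ⟨by linarith [mul_nonneg (div_nonneg (sq_nonneg m) (sq_nonneg q)) hb],
    le_of_mul_le_mul_left (a := m ^ 2) (by linarith) (by positivity)⟩

lemma sum_abs_sub_le_of_KLfin_le {ι : Type*} [Fintype ι] {p p' q : ι → ℝ}
    (hp0 : ∀ i, 0 ≤ p i) (hp'0 : ∀ i, 0 ≤ p' i) (hq0 : ∀ i, 0 ≤ q i)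
    (hp1 : ∑ i, p i = 1) (hp'1 : ∑ i, p' i = 1) (hq1 : ∑ i, q i = 1)
    (hpq : ∀ i, q i = 0 → p i = 0) (hp'q : ∀ i, q i = 0 → p' i = 0) {m : ℝ} (hm : 0 ≤ m)
    (hp : KLfin p q ≤ m ^ 2) (hp' : KLfin p' q ≤ 2 * m ^ 2) :
    ∑ i, |p i - p' i| ≤ 3 * √2 * m := by
  have h1 := sum_abs_sub_le_sqrt_of_KLfin_le hp0 hq0 hp1 hq1 hpq hp
  have h2 := sum_abs_sub_le_sqrt_of_KLfin_le hp'0 hq0 hp'1 hq1 hp'q hp'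
  rw [Real.sqrt_mul zero_le_two, Real.sqrt_sq hm] at h1
  rw [← mul_assoc, show (2 : ℝ) * 2 = 2 ^ 2 by norm_num, ← mul_pow, Real.sqrt_sq (by positivity)]
    at h2
  calc ∑ i, |p i - p' i| ≤ ∑ i, (|p i - q i| + |p' i - q i|) :=
        sum_le_sum fun i _ => (abs_sub_le _ (q i) _).trans_eq (by rw [abs_sub_comm (q i)])
    _ ≤ √2 * m + 2 * m := by rw [sum_add_distrib]; linarith
    _ ≤ 3 * √2 * m := by nlinarith [Real.one_lt_sqrt_two]

lemma sum_abs_sub_le_of_sqrt_sum_sq_le {ι : Type*} [Fintype ι] {b c : ι → ℝ} {q : ℝ}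
    (hb : √(∑ i, b i ^ 2) ≤ q) (hc : ∑ i, c i ^ 2 ≤ 2 * q ^ 2) :
    ∑ i, |b i - c i| ≤ 3 * √(Fintype.card ι) * q := by
  have hq : 0 ≤ q := (Real.sqrt_nonneg _).trans hb
  have hc' : √(∑ i, c i ^ 2) ≤ 2 * q :=
    (Real.sqrt_le_left (by positivity)).2 (by nlinarith)
  calc ∑ i, |b i - c i| ≤ √(Fintype.card ι) * √(∑ i, (b i - c i) ^ 2) :=
        sum_abs_le_sqrt_card_mul_sqrt_sum_sq _
    _ ≤ √(Fintype.card ι) * (3 * q) := by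
        gcongr
        linarith [sqrt_sum_sub_sq_le b c]
    _ = 3 * √(Fintype.card ι) * q := by ring

theorem stmt15_general {S : Type*} [Fintype S] [DecidableEq S]
    (P Phat Pbar : Matrix S S ℝ) (γ : ℝ)
    (hP0 : ∀ x y, 0 ≤ P x y) (hP1 : ∀ x, ∑ y, P x y = 1)
    (hPhat0 : ∀ x y, 0 ≤ Phat x y) (hPhat1 : ∀ x, ∑ y, Phat x y = 1)
    (hPbar0 : ∀ x y, 0 ≤ Pbar x y) (hPbar1 : ∀ x, ∑ y, Pbar x y = 1)
    (hsuppP : ∀ x y, Phat x y = 0 → P x y = 0)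
    (hsuppPbar : ∀ x y, Phat x y = 0 → Pbar x y = 0)
    (hγ0 : 0 ≤ γ) (hγ1 : γ < 1)
    (r : S → ℝ) (d : ℕ) (φ : Fin d → S → ℝ) (ψ : S → Fin d → ℝ)
    (εM εQ : S → ℝ)
    (hεM : ∀ x, εM x = Real.sqrt (KLfin (fun y => P x y) (fun y => Phat x y)))
    (hεQ : ∀ x, εQ x = Real.sqrt (∑ i : Fin d, ((∑ y, P x y * φ i y) - ψ x i) ^ 2))
    (hεMpos : 0 < supNorm εM) (hεQpos : 0 < supNorm εQ)
    (β : ℝ) (hβ : β = supNorm εQ / supNorm εM)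
    (hObj : ∀ x,
      KLfin (fun y => Pbar x y) (fun y => Phat x y) +
          (1 / β ^ 2) * (∑ i : Fin d, ((∑ y, Pbar x y * φ i y) - ψ x i) ^ 2) ≤
        KLfin (fun y => P x y) (fun y => Phat x y) + (1 / β ^ 2) * (εQ x) ^ 2)
    (V Vbar : S → ℝ)
    (hV : V = ((1 : Matrix S S ℝ) - γ • P)⁻¹.mulVec r)
    (hVbar : Vbar = ((1 : Matrix S S ℝ) - γ • Pbar)⁻¹.mulVec r)
    (c₁ c₂ : ℝ)
    (hc₁ : c₁ = γ * Real.sqrt 2 / (1 - γ))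
    (hc₂ : c₂ = 3 * γ * Real.sqrt d / (1 - γ)) :
    ∀ w : Fin d → ℝ,
      supNorm (fun x => V x - Vbar x) ≤
        3 * c₁ * supNorm εM * supNorm (fun x => V x - ∑ i, w i * φ i x) +
          c₂ * supNorm εQ * supNorm w := by
  intro w
  set E := supNorm (fun x => V x - ∑ i, w i * φ i x)
  have hrow : ∀ x, |∑ y, (P x y - Pbar x y) * V y| ≤
      3 * √2 * supNorm εM * E + 3 * √d * supNorm εQ * supNorm w := by
    intro x
    have hKL : KLfin (P x) (Phat x) ≤ supNorm εM ^ 2 :=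
      (Real.sqrt_le_left hεMpos.le).1 (hεM x ▸ le_supNorm εM x)
    have hεQx : √(∑ i, (∑ y, P x y * φ i y - ψ x i) ^ 2) ≤ supNorm εQ := hεQ x ▸ le_supNorm εQ x
    obtain ⟨hKLbar, hfeatbar⟩ := le_two_mul_sq_of_add_inv_sq_mul_le hεMpos hεQpos
      (KLfin_nonneg (hPbar0 x) (hPhat0 x) (hPbar1 x) (hPhat1 x) (hsuppPbar x))
      (sum_nonneg fun i _ => sq_nonneg _) hKL
      (pow_le_pow_left₀ (hεQ x ▸ Real.sqrt_nonneg _) (le_supNorm εQ x) 2) (hβ ▸ hObj x)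
    have hfeat : ∀ i, ∑ y, (P x y - Pbar x y) * φ i y =
        (∑ y, P x y * φ i y - ψ x i) - (∑ y, Pbar x y * φ i y - ψ x i) := fun i => by
      simp only [sub_mul, sum_sub_distrib]
      ring
    refine (abs_sum_mul_le_of_approx _ V φ w).trans (add_le_add ?_ ?_)
    · exact mul_le_mul_of_nonneg_right (sum_abs_sub_le_of_KLfin_le (hP0 x) (hPbar0 x)
        (hPhat0 x) (hP1 x) (hPbar1 x) (hPhat1 x) (hsuppP x) (hsuppPbar x) hεMpos.le hKL hKLbar)
        (supNorm_nonneg _)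
    · refine mul_le_mul_of_nonneg_right ?_ (supNorm_nonneg _)
      simpa only [hfeat, Fintype.card_fin] using sum_abs_sub_le_of_sqrt_sum_sq_le hεQx hfeatbar
  calc supNorm (fun x => V x - Vbar x)
      ≤ γ * (3 * √2 * supNorm εM * E + 3 * √d * supNorm εQ * supNorm w) / (1 - γ) :=
        supNorm_sub_le_of_bellman hPbar0 hPbar1 hγ0 hγ1
          (apply_eq_add_mul_sum_of_eq_inv_mulVec hP0 hP1 hγ0 hγ1 hV)
          (apply_eq_add_mul_sum_of_eq_inv_mulVec hPbar0 hPbar1 hγ0 hγ1 hVbar)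
          (by have := supNorm_nonneg (fun x => V x - ∑ i, w i * φ i x)
              have := supNorm_nonneg w
              positivity) hrow
    _ = _ := by
        rw [hc₁, hc₂]
        field_simp

theorem stmt15 {S : Type*} [Fintype S] [Nonempty S] [DecidableEq S]
    (P Phat Pbar : Matrix S S ℝ) (γ : ℝ)
    (hP0 : ∀ x y, 0 ≤ P x y) (hP1 : ∀ x, ∑ y, P x y = 1)
    (hPhat0 : ∀ x y, 0 ≤ Phat x y) (hPhat1 : ∀ x, ∑ y, Phat x y = 1)
    (hPbar0 : ∀ x y, 0 ≤ Pbar x y) (hPbar1 : ∀ x, ∑ y, Pbar x y = 1)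
    (hsuppP : ∀ x y, Phat x y = 0 → P x y = 0)
    (hsuppPbar : ∀ x y, Phat x y = 0 → Pbar x y = 0)
    (hγ0 : 0 ≤ γ) (hγ1 : γ < 1)
    (r : S → ℝ) (d : ℕ) (φ : Fin d → S → ℝ) (ψ : S → Fin d → ℝ)
    (εM εQ : S → ℝ)
    (hεM : ∀ x, εM x = Real.sqrt (KLfin (fun y => P x y) (fun y => Phat x y)))
    (hεQ : ∀ x, εQ x = Real.sqrt (∑ i : Fin d, ((∑ y, P x y * φ i y) - ψ x i) ^ 2))
    (hεMpos : 0 < supNorm εM) (hεQpos : 0 < supNorm εQ)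
    (β : ℝ) (hβ : β = supNorm εQ / supNorm εM)
    (hKL : ∀ x, KLfin (fun y => P x y) (fun y => Pbar x y) ≤
      KLfin (fun y => P x y) (fun y => Phat x y) + (2 / β ^ 2) * (εQ x) ^ 2)
    (hObj : ∀ x,
      KLfin (fun y => Pbar x y) (fun y => Phat x y) +
          (1 / β ^ 2) * (∑ i : Fin d, ((∑ y, Pbar x y * φ i y) - ψ x i) ^ 2) ≤
        KLfin (fun y => P x y) (fun y => Phat x y) + (1 / β ^ 2) * (εQ x) ^ 2)
    (V Vbar : S → ℝ)
    (hV : V = ((1 : Matrix S S ℝ) - γ • P)⁻¹.mulVec r)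
    (hVbar : Vbar = ((1 : Matrix S S ℝ) - γ • Pbar)⁻¹.mulVec r)
    (c₁ c₂ : ℝ)
    (hc₁ : c₁ = γ * Real.sqrt 2 / (1 - γ))
    (hc₂ : c₂ = 3 * γ * Real.sqrt d / (1 - γ)) :
    ∀ w : Fin d → ℝ,
      supNorm (fun x => V x - Vbar x) ≤
        3 * c₁ * supNorm εM * supNorm (fun x => V x - ∑ i, w i * φ i x) +
          c₂ * supNorm εQ * supNorm w :=
  stmt15_general P Phat Pbar γ hP0 hP1 hPhat0 hPhat1 hPbar0 hPbar1 hsuppP hsuppPbar hγ0 hγ1 r d φ ψ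
    εM εQ hεM hεQ hεMpos hεQpos β hβ hObj V Vbar hV hVbar c₁ c₂ hc₁ hc₂
end

section
/- Suppose there exist A ∈ ℝ and B ≥ 0 such that A − B/2 ≤ φᵢ(z) ≤ A + B/2 for all z ∈ Z and all 1 ≤ i ≤ d, and let b ∈ ℝ^d satisfy A − B/2 ≤ bᵢ ≤ A + B/2 for all i. Let β > 0 and let λ* be a maximizer of D_{β,b} over ℝ^d. Then the density of the Gibbs tilt q_{λ*} with respect to p̂ satisfies exp(⟨λ*, φ(z)⟩ − Λ_{λ*}) ≤ exp(2B²d/β²) for every z ∈ Z. -/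
open MeasureTheory

/-- Euclidean inner product on `ℝ^d`. -/
noncomputable def dotd {d : ℕ} (lam v : Fin d → ℝ) : ℝ := ∑ i, lam i * v i

/-- The log-normalizer `Λ_λ = log ∫ exp⟨λ, φ(z)⟩ dp̂(z)`. -/
noncomputable def LamZ {Z : Type*} [MeasurableSpace Z] (phat : Measure Z)
    {d : ℕ} (φ : Z → Fin d → ℝ) (lam : Fin d → ℝ) : ℝ :=
  Real.log (∫ z, Real.exp (dotd lam (φ z)) ∂phat)

/-- The `ℓ₂²`-regularized dual objective `D_{β,b}(λ) = ⟨λ,b⟩ − Λ_λ − (β²/4)‖λ‖₂²`. -/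
noncomputable def Dreg {Z : Type*} [MeasurableSpace Z] (phat : Measure Z)
    {d : ℕ} (φ : Z → Fin d → ℝ) (β : ℝ) (b lam : Fin d → ℝ) : ℝ :=
  dotd lam b - LamZ phat φ lam - (β ^ 2 / 4) * ∑ i, (lam i) ^ 2

/-! A maximizer `λ*` of `D` satisfies `|λ*ᵢ| ≤ 2B/β²` for every `i`: otherwise moving `λ*ᵢ` to
`±2B/β²` changes `⟨λ, b⟩ - Λ_λ` by at most `B |Δλᵢ|` (because `|φᵢ - bᵢ| ≤ B`) while the penalty
drops by more. Since each `φᵢ` varies by at most `B`, `Λ_λ ≥ ⟨λ, φ(z)⟩ - B ‖λ‖₁` for every `z`, so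
the log-density of `q_{λ*}` is at most `B ‖λ*‖₁ ≤ 2B²d/β²`. -/

open Real Function

theorem Fintype.sum_apply_update {ι α M : Type*} [Fintype ι] [DecidableEq ι] [AddCommGroup M]
    (F : ι → α → M) (x : ι → α) (i : ι) (t : α) :
    ∑ j, F j (update x i t j) = ∑ j, F j (x j) + (F i t - F i (x i)) := by
  simp only [apply_update F, Finset.sum_update_of_mem (Finset.mem_univ i),
    ← Finset.add_sum_erase _ _ (Finset.mem_univ i), Finset.sdiff_singleton_eq_erase]
  abel

lemma add_log_integral_exp_le {α : Type*} [MeasurableSpace α] {μ : Measure α} [NeZero μ]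
    {f g : α → ℝ} {c : ℝ} (hf : Integrable (fun x => exp (f x)) μ)
    (hg : Integrable (fun x => exp (g x)) μ) (hle : ∀ x, c + g x ≤ f x) :
    c + log (∫ x, exp (g x) ∂μ) ≤ log (∫ x, exp (f x) ∂μ) := by
  have hmono : exp c * ∫ x, exp (g x) ∂μ ≤ ∫ x, exp (f x) ∂μ := by
    rw [← integral_const_mul]
    exact integral_mono (hg.const_mul _) hf fun x => by
      simpa only [← exp_add] using exp_le_exp.2 (hle x)
  have hpos := integral_exp_pos hg
  rw [← log_exp c, ← log_mul (exp_pos c).ne' hpos.ne']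
  exact log_le_log (by positivity) hmono

lemma dotd_update {d : ℕ} (lam v : Fin d → ℝ) (i : Fin d) (t : ℝ) :
    dotd (update lam i t) v = dotd lam v + (t - lam i) * v i := by
  rw [dotd, Fintype.sum_apply_update (fun j s => s * v j), dotd]
  ring

lemma abs_dotd_sub_dotd_le {d : ℕ} {v w : Fin d → ℝ} {B : ℝ} (hvw : ∀ i, |v i - w i| ≤ B)
    (lam : Fin d → ℝ) : |dotd lam v - dotd lam w| ≤ B * ∑ i, |lam i| := by
  rw [dotd, dotd, ← Finset.sum_sub_distrib, Finset.mul_sum]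
  refine (Finset.abs_sum_le_sum_abs _ _).trans (Finset.sum_le_sum fun i _ => ?_)
  rw [← mul_sub, abs_mul, mul_comm]
  exact mul_le_mul_of_nonneg_right (hvw i) (abs_nonneg _)

section LogPartition

variable {Z : Type*} [MeasurableSpace Z] {phat : Measure Z} {d : ℕ} {φ : Z → Fin d → ℝ}

lemma integrable_exp_dotd [IsFiniteMeasure phat] (hφm : Measurable φ) {C : ℝ}
    (hφC : ∀ z i, |φ z i| ≤ C) (lam : Fin d → ℝ) :
    Integrable (fun z => exp (dotd lam (φ z))) phat := by
  have hmeas : Measurable fun z => dotd lam (φ z) := by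
    unfold dotd; fun_prop
  refine .of_bound (hmeas.exp.aestronglyMeasurable) (exp (C * ∑ i, |lam i|))
    (.of_forall fun z => ?_)
  have hbound := abs_dotd_sub_dotd_le (v := φ z) (w := 0) (by simpa using hφC z) lam
  rw [norm_of_nonneg (exp_pos _).le]
  simp only [dotd, Pi.zero_apply, mul_zero, Finset.sum_const_zero, sub_zero] at hbound
  exact exp_le_exp.2 ((le_abs_self _).trans hbound)

lemma LamZ_zero [IsProbabilityMeasure phat] : LamZ phat φ 0 = 0 := by
  simp [LamZ, dotd]

lemma dotd_sub_LamZ_le [IsProbabilityMeasure phat]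
    (hint : ∀ lam, Integrable (fun z => exp (dotd lam (φ z))) phat) {B : ℝ}
    (hosc : ∀ z z' i, |φ z i - φ z' i| ≤ B) (lam : Fin d → ℝ) (z : Z) :
    dotd lam (φ z) - LamZ phat φ lam ≤ B * ∑ i, |lam i| := by
  have hle : ∀ z', (dotd lam (φ z) - B * ∑ i, |lam i|) + dotd 0 (φ z') ≤ dotd lam (φ z') := by
    intro z'
    have := (abs_le.1 (abs_dotd_sub_dotd_le (hosc z z') lam)).2
    simp only [dotd, Pi.zero_apply, zero_mul, Finset.sum_const_zero] at this ⊢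
    linarith
  have := add_log_integral_exp_le (hint lam) (hint 0) hle
  rw [← LamZ, ← LamZ, LamZ_zero] at this
  linarith

lemma Dreg_le_Dreg_update [NeZero phat]
    (hint : ∀ lam, Integrable (fun z => exp (dotd lam (φ z))) phat) {b : Fin d → ℝ} {B : ℝ}
    (hφb : ∀ z i, |φ z i - b i| ≤ B) (β : ℝ) (lam : Fin d → ℝ) (i : Fin d) (t : ℝ) :
    β ^ 2 / 4 * (lam i ^ 2 - t ^ 2) - B * |lam i - t| ≤
      Dreg phat φ β b (update lam i t) - Dreg phat φ β b lam := by
  have hle : ∀ z, ((lam i - t) * b i - B * |lam i - t|) + dotd (update lam i t) (φ z) ≤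
      dotd lam (φ z) := by
    intro z
    have hdev : |(lam i - t) * (φ z i - b i)| ≤ |lam i - t| * B := by
      rw [abs_mul]; exact mul_le_mul_of_nonneg_left (hφb z i) (abs_nonneg _)
    rw [dotd_update]
    linarith [(abs_le.1 hdev).1]
  have hLam := add_log_integral_exp_le (hint lam) (hint (update lam i t)) hle
  rw [← LamZ, ← LamZ] at hLam
  simp only [Dreg, dotd_update, Fintype.sum_apply_update (fun _ s => s ^ 2)]
  nlinarith

lemma abs_le_of_forall_Dreg_le [NeZero phat]
    (hint : ∀ lam, Integrable (fun z => exp (dotd lam (φ z))) phat) {b : Fin d → ℝ} {B β : ℝ}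
    (hφb : ∀ z i, |φ z i - b i| ≤ B) (hβ : 0 < β) {lamStar : Fin d → ℝ}
    (hmax : ∀ lam, Dreg phat φ β b lam ≤ Dreg phat φ β b lamStar) (i : Fin d) :
    |lamStar i| ≤ 2 * B / β ^ 2 := by
  set m := 2 * B / β ^ 2
  have hβm : β ^ 2 * m = 2 * B := mul_div_cancel₀ _ (by positivity)
  by_contra! hlt
  -- moving the coordinate to `±m` gains at least `β² (|λᵢ| - m)² / 4 > 0`, as `β² m = 2B`
  obtain ⟨t, ht, hdist⟩ : ∃ t, t ^ 2 = m ^ 2 ∧ |lamStar i - t| = |lamStar i| - m := by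
    rcases le_or_gt 0 (lamStar i) with hc | hc
    · rw [abs_of_nonneg hc] at hlt ⊢
      exact ⟨m, rfl, abs_of_pos (by linarith)⟩
    · rw [abs_of_neg hc] at hlt ⊢
      exact ⟨-m, by ring, by rw [abs_of_neg (by linarith)]; ring⟩
  have hgain := Dreg_le_Dreg_update hint hφb β lamStar i t
  rw [ht, hdist, ← sq_abs (lamStar i)] at hgain
  nlinarith [hmax (update lamStar i t), mul_pos (sub_pos.2 hlt) (pow_pos hβ 2)]

end LogPartition

theorem stmt18 {Z : Type*} [MeasurableSpace Z] (phat : Measure Z) [IsProbabilityMeasure phat]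
    {d : ℕ} (φ : Z → Fin d → ℝ) (hφm : Measurable φ)
    (A B : ℝ) (hB : 0 ≤ B)
    (hφlb : ∀ z i, A - B / 2 ≤ φ z i) (hφub : ∀ z i, φ z i ≤ A + B / 2)
    (b : Fin d → ℝ) (hblb : ∀ i, A - B / 2 ≤ b i) (hbub : ∀ i, b i ≤ A + B / 2)
    (β : ℝ) (hβ : 0 < β) (lamStar : Fin d → ℝ)
    (hmax : ∀ lam, Dreg phat φ β b lam ≤ Dreg phat φ β b lamStar) :
    ∀ z, Real.exp (dotd lamStar (φ z) - LamZ phat φ lamStar) ≤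
      Real.exp (2 * B ^ 2 * d / β ^ 2) := by
  have hφC : ∀ z i, |φ z i| ≤ |A| + B := fun z i =>
    abs_le.2 ⟨by linarith [neg_abs_le A, hφlb z i], by linarith [le_abs_self A, hφub z i]⟩
  have hint := integrable_exp_dotd (phat := phat) hφm hφC
  have hφb : ∀ z i, |φ z i - b i| ≤ B := fun z i =>
    abs_le.2 ⟨by linarith [hφlb z i, hbub i], by linarith [hφub z i, hblb i]⟩
  have hcoord := abs_le_of_forall_Dreg_le hint hφb hβ hmax
  have hosc : ∀ z z' i, |φ z i - φ z' i| ≤ B := fun z z' i =>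
    abs_le.2 ⟨by linarith [hφlb z i, hφub z' i], by linarith [hφub z i, hφlb z' i]⟩
  intro z
  calc exp (dotd lamStar (φ z) - LamZ phat φ lamStar)
      ≤ exp (B * ∑ i, |lamStar i|) := exp_le_exp.2 (dotd_sub_LamZ_le hint hosc lamStar z)
    _ ≤ exp (B * ∑ _i : Fin d, 2 * B / β ^ 2) := by gcongr with i; exact hcoord i
    _ = exp (2 * B ^ 2 * d / β ^ 2) := by
      rw [Finset.sum_const, Finset.card_univ, Fintype.card_fin, nsmul_eq_mul]
      congr 1
      ring
end
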